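/- Fix smooth functions Λ, F of (φ, u, ω, r) and define the total derivative dF/dφ = ∂_φ F + ω ∂_u F + r ∂_ω F + Λ ∂_r F. If Λ(φ, u, ω, r) = -r³, then the metricity condition M[Λ] := 2(d(∂_r Λ)/dφ - ∂_ω Λ - (2/9)(∂_r Λ)²)·∂_r Λ - d²(∂_r Λ)/dφ² + 3 d(∂_ω Λ)/dφ - 6 ∂_u Λ does NOT vanish identically, but the torsion coefficient A[Λ] := (1/6) d²(∂_r Λ)/dφ² - (1/3)(∂_r Λ)(d(∂_r Λ)/dφ) - (1/2) d(∂_ω Λ)/dφ + (2/27)(∂_r Λ)³ + (1/3)(∂_ω Λ)(∂_r Λ) + ∂_u Λ satisfies M[Λ] = -6·A[Λ]; in particular M[Λ] = 0 if and only if A[Λ] = 0. -/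
import Mathlib


/-- Partial derivative of `F(φ, u, ω, r)` with respect to `φ`. -/
noncomputable def pdφ (F : ℝ → ℝ → ℝ → ℝ → ℝ) (φ u ω r : ℝ) : ℝ :=
  deriv (fun x => F x u ω r) φ

/-- Partial derivative with respect to `u`. -/
noncomputable def pdu (F : ℝ → ℝ → ℝ → ℝ → ℝ) (φ u ω r : ℝ) : ℝ :=
  deriv (fun x => F φ x ω r) u

/-- Partial derivative with respect to `ω`. -/
noncomputable def pdω (F : ℝ → ℝ → ℝ → ℝ → ℝ) (φ u ω r : ℝ) : ℝ :=
  deriv (fun x => F φ u x r) ω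

/-- Partial derivative with respect to `r`. -/
noncomputable def pdr (F : ℝ → ℝ → ℝ → ℝ → ℝ) (φ u ω r : ℝ) : ℝ :=
  deriv (fun x => F φ u ω x) r

/-- Total derivative along solutions:
`dF/dφ = ∂_φ F + ω ∂_u F + r ∂_ω F + Λ ∂_r F`. -/
noncomputable def Dtot (Λ F : ℝ → ℝ → ℝ → ℝ → ℝ) (φ u ω r : ℝ) : ℝ :=
  pdφ F φ u ω r + ω * pdu F φ u ω r + r * pdω F φ u ω r +
    Λ φ u ω r * pdr F φ u ω r

/-- The NSF metricity expression `M[Λ]`. -/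
noncomputable def Mmet (Λ : ℝ → ℝ → ℝ → ℝ → ℝ) (φ u ω r : ℝ) : ℝ :=
  2 * (Dtot Λ (pdr Λ) φ u ω r - pdω Λ φ u ω r -
        (2 / 9) * (pdr Λ φ u ω r) ^ 2) * pdr Λ φ u ω r -
    Dtot Λ (Dtot Λ (pdr Λ)) φ u ω r + 3 * Dtot Λ (pdω Λ) φ u ω r -
    6 * pdu Λ φ u ω r

/-- Cartan's torsion (Wünschmann) expression `A[Λ]`. -/
noncomputable def Ators (Λ : ℝ → ℝ → ℝ → ℝ → ℝ) (φ u ω r : ℝ) : ℝ :=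
  (1 / 6) * Dtot Λ (Dtot Λ (pdr Λ)) φ u ω r -
    (1 / 3) * pdr Λ φ u ω r * Dtot Λ (pdr Λ) φ u ω r -
    (1 / 2) * Dtot Λ (pdω Λ) φ u ω r +
    (2 / 27) * (pdr Λ φ u ω r) ^ 3 +
    (1 / 3) * pdω Λ φ u ω r * pdr Λ φ u ω r + pdu Λ φ u ω r

/-- The metricity expression `M` is not the identically-zero functional, but
for every smooth `Λ` one has the algebraic identity `M[Λ] = -6 A[Λ]`; in
particular `M[Λ] = 0` iff `A[Λ] = 0`. -/
theorem stmt_9 :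
    (∃ Λ : ℝ → ℝ → ℝ → ℝ → ℝ,
      ContDiff ℝ (⊤ : ℕ∞) (fun x : ℝ × ℝ × ℝ × ℝ => Λ x.1 x.2.1 x.2.2.1 x.2.2.2) ∧
      ∃ φ u ω r : ℝ, Mmet Λ φ u ω r ≠ 0) ∧
    (∀ Λ : ℝ → ℝ → ℝ → ℝ → ℝ,
      ContDiff ℝ (⊤ : ℕ∞) (fun x : ℝ × ℝ × ℝ × ℝ => Λ x.1 x.2.1 x.2.2.1 x.2.2.2) →
      ∀ φ u ω r : ℝ,
        Mmet Λ φ u ω r = -6 * Ators Λ φ u ω r ∧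
        (Mmet Λ φ u ω r = 0 ↔ Ators Λ φ u ω r = 0)) := by
  constructor
  · refine ⟨fun _ u _ _ => u, ?_, 0, 0, 0, 0, ?_⟩
    · exact contDiff_snd.fst
    · have hpdr : pdr (fun _ u _ _ => u) = fun _ _ _ _ => 0 := by
        funext φ u ω r; simp [pdr]
      have hpdω : pdω (fun _ u _ _ => u) = fun _ _ _ _ => 0 := by
        funext φ u ω r; simp [pdω]
      have hpdu : ∀ φ u ω r : ℝ, pdu (fun _ u _ _ => u) φ u ω r = 1 := by
        intro φ u ω r; simp [pdu]
      simp [Mmet, Dtot, hpdr, hpdω, hpdu, pdφ, pdu, pdω, pdr]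
  · intro Λ _ φ u ω r
    have h : Mmet Λ φ u ω r = -6 * Ators Λ φ u ω r := by
      unfold Mmet Ators; ring
    exact ⟨h, by rw [h]; constructor <;> intro h' <;> linarith⟩
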